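/- arXiv:1906.11037 — 3 statements merged into one kernel-verified Lean document; each statement's English description precedes it below -/
import Mathlib

section
/- Let p be a polynomial in n variables given by p(x) = Σ_{|β̂| ≤ l} a_{β̂} x^{β̂} (β̂ ∈ ℕⁿ), and let k ≥ l. Then for all x ∈ ℝⁿ, p(x) = Σ_{|α̂| + α₀ = k} b_{(α̂,α₀)} B^{(k)}_{(α̂,α₀)}(x), where b_{(α̂,α₀)} = Σ_{β̂ ≤ α̂, |β̂| ≤ l} ( (Π_{i=1}^{n} C(α̂ᵢ, β̂ᵢ)) / ( k! / (β̂₁!⋯β̂ₙ!(k−|β̂|)!) ) ) · a_{β̂}. That is, the simplicial Bernstein coefficients of p of degree k on the standard simplex are given by this explicit formula. -/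
/-!
With barycentric coordinates `y = (1 - ∑ xᵢ, x₁, …, xₙ)` one has `∑ yⱼ = 1`, so a monomial of
degree `|β| ≤ k` can be homogenised: `x^β = y^(0,β) · (∑ yⱼ)^(k - |β|)`. Expanding the power by
the multinomial theorem and shifting the index `γ ↦ α = γ + (0,β)` turns each term into a multiple
of the Bernstein polynomial `B_α = multinomial(α) · y^α`, with coefficient
`multinomial(γ) / multinomial(α) = ∏ C(α̂ᵢ, βᵢ) · β! (k - |β|)! / k!`.
Summing over the monomials of `p` and exchanging the two sums gives the formula.
-/

open Finset

noncomputable section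

/-- The standard simplex Δ in ℝⁿ. -/
def stdSimp (n : ℕ) : Set (Fin n → ℝ) :=
  {x | (∀ i, 0 ≤ x i) ∧ ∑ i, x i ≤ 1}

/-- Multi-indices α ∈ ℕ^{n+1} with |α| = k. -/
def multIdx (n k : ℕ) : Finset (Fin (n+1) → ℕ) :=
  Finset.Nat.antidiagonalTuple (n+1) k

lemma multIdx_nonempty (n k : ℕ) : (multIdx n k).Nonempty :=
  ⟨fun i => if i = 0 then k else 0, by
    simp [multIdx, Finset.Nat.mem_antidiagonalTuple]⟩

/-- Bernstein basis polynomial of degree k on the standard simplex. -/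
def bern (n k : ℕ) (α : Fin (n+1) → ℕ) (x : Fin n → ℝ) : ℝ :=
  ((k.factorial : ℝ) / ∏ i, ((α i).factorial : ℝ)) *
    (∏ i : Fin n, x i ^ α i.succ) * (1 - ∑ i, x i) ^ α 0

/-- i-th standard unit multi-index. -/
def unitIdx (n : ℕ) (i : Fin (n+1)) : Fin (n+1) → ℕ :=
  fun j => if j = i then 1 else 0

/-- vertex multi-index k·eᵢ -/
def vertIdx (n k : ℕ) (i : Fin (n+1)) : Fin (n+1) → ℕ :=
  fun j => if j = i then k else 0

/-- second difference -/
def secondDiff (n : ℕ) (b : (Fin (n+1) → ℕ) → ℝ) (γ : Fin (n+1) → ℕ)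
    (i j : Fin (n+1)) : ℝ :=
  b (γ + unitIdx n i + unitIdx n (j - 1)) + b (γ + unitIdx n (i - 1) + unitIdx n j)
    - b (γ + unitIdx n (i - 1) + unitIdx n (j - 1)) - b (γ + unitIdx n i + unitIdx n j)

/-- Multi-indices β̂ ∈ ℕⁿ with |β̂| ≤ l. -/
def lowIdx (n l : ℕ) : Finset (Fin n → ℕ) :=
  (Finset.range (l+1)).biUnion fun j => Finset.Nat.antidiagonalTuple n j

lemma mem_lowIdx {n l : ℕ} {β : Fin n → ℕ} : β ∈ lowIdx n l ↔ ∑ i, β i ≤ l := by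
  simp [lowIdx, Finset.Nat.mem_antidiagonalTuple]

lemma multIdx_eq_piAntidiag (n k : ℕ) : multIdx n k = piAntidiag univ k :=
  (piAntidiag_univ_fin_eq_antidiagonalTuple k (n + 1)).symm

lemma map_addRightEmbedding_piAntidiag {ι : Type*} [Fintype ι] [DecidableEq ι]
    (δ : ι → ℕ) {k : ℕ} (hδ : ∑ i, δ i ≤ k) :
    (piAntidiag univ (k - ∑ i, δ i)).map (addRightEmbedding δ) =
      (piAntidiag univ k).filter (fun α => ∀ i, δ i ≤ α i) := by
  ext α
  simp only [mem_map, mem_piAntidiag, mem_filter, addRightEmbedding_apply, ← Pi.le_def]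
  constructor
  · rintro ⟨γ, ⟨hγ, -⟩, rfl⟩
    refine ⟨⟨?_, by simp⟩, le_add_self⟩
    change ∑ i, γ i = _ at hγ
    simp only [Pi.add_apply, sum_add_distrib]
    omega
  · rintro ⟨⟨hα, -⟩, hδα⟩
    refine ⟨α - δ, ⟨?_, by simp⟩, tsub_add_cancel_of_le hδα⟩
    simp only [Pi.sub_apply]
    rw [sum_tsub_distrib _ fun i _ => hδα i, hα]

lemma prod_add_choose_mul_prod_factorial_mul_prod_factorial {ι : Type*} (s : Finset ι)
    (γ δ : ι → ℕ) :
    (∏ i ∈ s, (γ i + δ i).choose (δ i)) * (∏ i ∈ s, (γ i).factorial) *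
        ∏ i ∈ s, (δ i).factorial = ∏ i ∈ s, (γ i + δ i).factorial := by
  rw [← prod_mul_distrib, ← prod_mul_distrib]
  exact prod_congr rfl fun i _ => Nat.add_choose_mul_factorial_mul_factorial _ _

lemma cast_multinomial_eq_factorial_div {ι K : Type*} [Field K] [CharZero K] (s : Finset ι) (f : ι → ℕ) :
    (Nat.multinomial s f : K) = (∑ i ∈ s, f i).factorial / ∏ i ∈ s, ((f i).factorial : K) := by
  rw [eq_div_iff (prod_ne_zero_iff.2 fun i _ => Nat.cast_ne_zero.2 (Nat.factorial_ne_zero _)),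
    mul_comm]
  exact_mod_cast Nat.multinomial_spec s f

def baryCoord {n : ℕ} (x : Fin n → ℝ) : Fin (n + 1) → ℝ :=
  Fin.cons (1 - ∑ i, x i) x

lemma sum_baryCoord {n : ℕ} (x : Fin n → ℝ) : ∑ j, baryCoord x j = 1 := by
  simp [baryCoord, Fin.sum_univ_succ]

lemma prod_baryCoord_pow_cons_zero {n : ℕ} (x : Fin n → ℝ) (β : Fin n → ℕ) :
    ∏ j, baryCoord x j ^ (Fin.cons 0 β : Fin (n + 1) → ℕ) j = ∏ i, x i ^ β i := by
  simp [baryCoord, Fin.prod_univ_succ]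

lemma bern_eq_multinomial_mul_prod_baryCoord {n k : ℕ} {α : Fin (n + 1) → ℕ}
    (hα : α ∈ multIdx n k) (x : Fin n → ℝ) :
    bern n k α x = Nat.multinomial univ α * ∏ j, baryCoord x j ^ α j := by
  rw [multIdx_eq_piAntidiag, mem_piAntidiag] at hα
  rw [bern, cast_multinomial_eq_factorial_div, hα.1, Fin.prod_univ_succ (fun j => baryCoord x j ^ α j)]
  simp only [baryCoord, Fin.cons_zero, Fin.cons_succ]
  ring

def monomialBernCoeff {n : ℕ} (k : ℕ) (β : Fin n → ℕ) (α : Fin (n + 1) → ℕ) : ℝ :=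
  (∏ i, ((α i.succ).choose (β i) : ℝ)) /
    ((k.factorial : ℝ) / ((∏ i, ((β i).factorial : ℝ)) * ((k - ∑ i, β i).factorial : ℝ)))

lemma monomialBernCoeff_mul_multinomial {n k : ℕ} {β : Fin n → ℕ} (hβ : ∑ i, β i ≤ k)
    {γ : Fin (n + 1) → ℕ} (hγ : γ ∈ piAntidiag univ (k - ∑ i, β i)) :
    monomialBernCoeff k β (γ + Fin.cons 0 β) * Nat.multinomial univ (γ + Fin.cons 0 β) =
      Nat.multinomial univ γ := by
  have hγsum : ∑ j, γ j = k - ∑ i, β i := (mem_piAntidiag.1 hγ).1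
  have hsum : ∑ j, (γ + (Fin.cons 0 β : Fin (n + 1) → ℕ)) j = k := by
    simp only [Pi.add_apply, sum_add_distrib, Fin.sum_univ_succ (Fin.cons 0 β : Fin (n + 1) → ℕ),
      Fin.cons_zero, Fin.cons_succ, zero_add]
    omega
  have hfact : ((∏ i, (γ i.succ + β i).choose (β i) : ℕ) : ℝ) * (∏ j, (γ j).factorial : ℕ) *
      (∏ i, (β i).factorial : ℕ) =
        (∏ j, ((γ + (Fin.cons 0 β : Fin (n + 1) → ℕ)) j).factorial : ℕ) := by
    have := prod_add_choose_mul_prod_factorial_mul_prod_factorial univ γ (Fin.cons 0 β)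
    simp only [Fin.prod_univ_succ (fun j => (γ j + (Fin.cons 0 β : Fin (n + 1) → ℕ) j).choose _),
      Fin.prod_univ_succ (fun j => ((Fin.cons 0 β : Fin (n + 1) → ℕ) j).factorial),
      Fin.cons_zero, Fin.cons_succ, Nat.choose_zero_right, Nat.factorial_zero, one_mul] at this
    exact_mod_cast this
  have hchoose : (∏ i, ((γ i.succ + β i).choose (β i) : ℝ)) ≠ 0 :=
    prod_ne_zero_iff.2 fun i _ => Nat.cast_ne_zero.2 (Nat.choose_pos (Nat.le_add_left _ _)).ne'
  rw [monomialBernCoeff, cast_multinomial_eq_factorial_div, cast_multinomial_eq_factorial_div, hsum, hγsum]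
  push_cast at hfact
  simp only [Pi.add_apply, Fin.cons_succ] at hfact ⊢
  rw [← hfact]
  field_simp

lemma prod_pow_eq_sum_bern {n k : ℕ} (β : Fin n → ℕ) (hβ : ∑ i, β i ≤ k) (x : Fin n → ℝ) :
    ∏ i, x i ^ β i = ∑ α ∈ (multIdx n k).filter (fun α => ∀ i, β i ≤ α i.succ),
      monomialBernCoeff k β α * bern n k α x := by
  set β' : Fin (n + 1) → ℕ := Fin.cons 0 β
  have hβ' : ∑ j, β' j = ∑ i, β i := by simp [β', Fin.sum_univ_succ]
  have hfilter : (multIdx n k).filter (fun α => ∀ i, β i ≤ α i.succ) =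
      (piAntidiag univ (k - ∑ i, β i)).map (addRightEmbedding β') := by
    rw [← hβ', map_addRightEmbedding_piAntidiag β' (hβ'.symm ▸ hβ), multIdx_eq_piAntidiag]
    ext α
    simp [β', Fin.forall_fin_succ]
  calc ∏ i, x i ^ β i = (∏ i, x i ^ β i) * (∑ j, baryCoord x j) ^ (k - ∑ i, β i) := by
        rw [sum_baryCoord, one_pow, mul_one]
    _ = ∑ γ ∈ piAntidiag (univ : Finset (Fin (n + 1))) (k - ∑ i, β i),
          Nat.multinomial univ γ * ∏ j, baryCoord x j ^ (γ + β') j := by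
        rw [sum_pow_eq_sum_piAntidiag, mul_sum]
        refine sum_congr rfl fun γ _ => ?_
        simp only [Pi.add_apply, pow_add, prod_mul_distrib, prod_baryCoord_pow_cons_zero, β']
        ring
    _ = ∑ α ∈ (multIdx n k).filter (fun α => ∀ i, β i ≤ α i.succ),
          monomialBernCoeff k β α * bern n k α x := by
        rw [hfilter, sum_map]
        refine sum_congr rfl fun γ hγ => ?_
        have hα : γ + β' ∈ multIdx n k :=
          (mem_filter.1 (hfilter ▸ mem_map_of_mem (addRightEmbedding β') hγ)).1
        rw [addRightEmbedding_apply, bern_eq_multinomial_mul_prod_baryCoord hα, ← mul_assoc,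
          monomialBernCoeff_mul_multinomial hβ hγ]

theorem stmt0_general (n l k : ℕ) (hlk : l ≤ k)
    (a : (Fin n → ℕ) → ℝ) :
    ∀ x : Fin n → ℝ,
      (∑ β ∈ lowIdx n l, a β * ∏ i, x i ^ β i) =
      ∑ α ∈ multIdx n k,
        (∑ β ∈ (lowIdx n l).filter (fun β => ∀ i, β i ≤ α i.succ),
            ((∏ i, ((α i.succ).choose (β i) : ℝ)) /
              ((k.factorial : ℝ) /
                ((∏ i, ((β i).factorial : ℝ)) * ((k - ∑ i, β i).factorial : ℝ)))) * a β)
          * bern n k α x := by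
  intro x
  calc ∑ β ∈ lowIdx n l, a β * ∏ i, x i ^ β i
      = ∑ β ∈ lowIdx n l, ∑ α ∈ (multIdx n k).filter (fun α => ∀ i, β i ≤ α i.succ),
          monomialBernCoeff k β α * a β * bern n k α x := by
        refine sum_congr rfl fun β hβ => ?_
        rw [prod_pow_eq_sum_bern β ((mem_lowIdx.1 hβ).trans hlk), mul_sum]
        exact sum_congr rfl fun α _ => by ring
    _ = ∑ α ∈ multIdx n k, ∑ β ∈ (lowIdx n l).filter (fun β => ∀ i, β i ≤ α i.succ),
          monomialBernCoeff k β α * a β * bern n k α x :=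
        sum_comm' fun β α => by simp only [mem_filter]; tauto
    _ = _ := sum_congr rfl fun α _ => (sum_mul ..).symm

/-- explicit formula for the simplicial Bernstein coefficients of
`p(x) = Σ_{|β̂| ≤ l} a_{β̂} x^{β̂}` of degree `k ≥ l` on the standard simplex. -/
theorem stmt0 (n l k : ℕ) (hn : 1 ≤ n) (hlk : l ≤ k)
    (a : (Fin n → ℕ) → ℝ) :
    ∀ x : Fin n → ℝ,
      (∑ β ∈ lowIdx n l, a β * ∏ i, x i ^ β i) =
      ∑ α ∈ multIdx n k,
        (∑ β ∈ (lowIdx n l).filter (fun β => ∀ i, β i ≤ α i.succ),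
            ((∏ i, ((α i.succ).choose (β i) : ℝ)) /
              ((k.factorial : ℝ) /
                ((∏ i, ((β i).factorial : ℝ)) * ((k - ∑ i, β i).factorial : ℝ)))) * a β)
          * bern n k α x :=
  stmt0_general n l k hlk a
end
end

section
/- (Monotonicity of the enclosure bound under degree elevation.) Let p be a polynomial in n variables with p(x) = Σ_{|α|=k} b_α B^{(k)}_α(x) for all x, and let b′_β = (1/(k+1)) Σ_{i=0}^{n} βᵢ b_{β−êᵢ} for |β| = k+1 be the degree-elevated coefficients. Then min_{|β|=k+1} b′_β ≥ min_{|α|=k} b_α and max_{|β|=k+1} b′_β ≤ max_{|α|=k} b_α; i.e., the degree-(k+1) enclosure interval B(p,k+1,Δ) is contained in the degree-k enclosure interval B(p,k,Δ). -/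
/-!
Since `∑ᵢ βᵢ = k + 1`, the elevated coefficient `b'_β` is the centre of mass of the values
`b_{β-êᵢ}` with weights `βᵢ`. Only the indices with `βᵢ ≠ 0` carry weight, and for those
`β - êᵢ` is a genuine multi-index of degree `k` (for `βᵢ = 0` the truncated subtraction would
leave `β` itself), so `b'_β` lies between the minimum and the maximum of the `b_α`, `|α| = k`.
-/

open Finset

noncomputable section

variable {n k : ℕ} {β : Fin (n+1) → ℕ}

lemma sub_unitIdx_mem_multIdx (hβ : β ∈ multIdx n (k+1)) {i : Fin (n+1)} (hi : β i ≠ 0) :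
    β - unitIdx n i ∈ multIdx n k := by
  simp only [multIdx, Finset.Nat.mem_antidiagonalTuple] at hβ ⊢
  have hle : ∀ j ∈ univ, unitIdx n i j ≤ β j := by
    intro j _
    by_cases h : j = i <;> simp [unitIdx, h]
    omega
  rw [Pi.sub_def, sum_tsub_distrib _ hle, hβ]
  simp [unitIdx]

lemma sum_cast_of_mem_multIdx (hβ : β ∈ multIdx n k) : ∑ i, (β i : ℝ) = k := by
  rw [← Nat.cast_sum, Finset.Nat.mem_antidiagonalTuple.mp hβ]

def degElev (n k : ℕ) (b : (Fin (n+1) → ℕ) → ℝ) (β : Fin (n+1) → ℕ) : ℝ :=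
  (1 / (k+1 : ℝ)) * ∑ i : Fin (n+1), (β i : ℝ) * b (β - unitIdx n i)

lemma degElev_eq_centerMass (b : (Fin (n+1) → ℕ) → ℝ) (hβ : β ∈ multIdx n (k+1)) :
    degElev n k b β =
      ({i | (β i : ℝ) ≠ 0} : Finset _).centerMass (fun i => (β i : ℝ))
        (fun i => b (β - unitIdx n i)) := by
  rw [centerMass_filter_ne_zero, centerMass, sum_cast_of_mem_multIdx hβ, degElev]
  simp [smul_eq_mul, one_div]

lemma sum_pos_of_mem_multIdx_succ (hβ : β ∈ multIdx n (k+1)) :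
    0 < ∑ i ∈ ({i | (β i : ℝ) ≠ 0} : Finset (Fin (n+1))), (β i : ℝ) := by
  rw [sum_filter_ne_zero, sum_cast_of_mem_multIdx hβ]
  positivity

lemma inf'_le_degElev (b : (Fin (n+1) → ℕ) → ℝ) (hβ : β ∈ multIdx n (k+1)) :
    (multIdx n k).inf' (multIdx_nonempty n k) b ≤ degElev n k b β := by
  rw [degElev_eq_centerMass b hβ]
  refine le_trans ?_ (inf_le_centerMass (fun i _ => Nat.cast_nonneg _)
    (sum_pos_of_mem_multIdx_succ hβ))
  refine le_inf' _ _ fun i hi => inf'_le b (sub_unitIdx_mem_multIdx hβ ?_)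
  simpa using hi

lemma degElev_le_sup' (b : (Fin (n+1) → ℕ) → ℝ) (hβ : β ∈ multIdx n (k+1)) :
    degElev n k b β ≤ (multIdx n k).sup' (multIdx_nonempty n k) b := by
  rw [degElev_eq_centerMass b hβ]
  refine le_trans (centerMass_le_sup (fun i _ => Nat.cast_nonneg _)
    (sum_pos_of_mem_multIdx_succ hβ)) ?_
  refine sup'_le _ _ fun i hi => le_sup' b (sub_unitIdx_mem_multIdx hβ ?_)
  simpa using hi

theorem stmt5_general (n k : ℕ)
    (b : (Fin (n+1) → ℕ) → ℝ)
    (b' : (Fin (n+1) → ℕ) → ℝ)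
    (hb' : ∀ β ∈ multIdx n (k+1),
      b' β = (1 / (k+1 : ℝ)) * ∑ i : Fin (n+1), (β i : ℝ) * b (β - unitIdx n i)) :
    (multIdx n k).inf' (multIdx_nonempty n k) b ≤
      (multIdx n (k+1)).inf' (multIdx_nonempty n (k+1)) b' ∧
    (multIdx n (k+1)).sup' (multIdx_nonempty n (k+1)) b' ≤
      (multIdx n k).sup' (multIdx_nonempty n k) b :=
  ⟨le_inf' _ _ fun β hβ => (hb' β hβ).symm ▸ inf'_le_degElev b hβ,
    sup'_le _ _ fun β hβ => (hb' β hβ).symm ▸ degElev_le_sup' b hβ⟩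

/-- monotonicity of the enclosure bound under degree elevation. -/
theorem stmt5 (n k : ℕ) (hn : 1 ≤ n)
    (p : (Fin n → ℝ) → ℝ) (b : (Fin (n+1) → ℕ) → ℝ)
    (hrep : ∀ x, p x = ∑ α ∈ multIdx n k, b α * bern n k α x)
    (b' : (Fin (n+1) → ℕ) → ℝ)
    (hb' : ∀ β ∈ multIdx n (k+1),
      b' β = (1 / (k+1 : ℝ)) * ∑ i : Fin (n+1), (β i : ℝ) * b (β - unitIdx n i)) :
    (multIdx n k).inf' (multIdx_nonempty n k) b ≤
      (multIdx n (k+1)).inf' (multIdx_nonempty n (k+1)) b' ∧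
    (multIdx n (k+1)).sup' (multIdx_nonempty n (k+1)) b' ≤
      (multIdx n k).sup' (multIdx_nonempty n k) b :=
  stmt5_general n k b b' hb'
end
end

section
/- (Sharpness of the rational enclosure bound.) Let p and q be polynomials in n variables of degree ≤ k with Bernstein coefficients b_α(p,k,Δ), b_α(q,k,Δ) on the standard simplex Δ, with b_α(q,k,Δ) > 0 for all |α| = k. Let f = p/q, b_α(f,k,Δ) = b_α(p,k,Δ)/b_α(q,k,Δ), and M^{(k)} = max_{|α|=k} b_α(f,k,Δ). Then max_{x ∈ Δ} f(x) = M^{(k)} if and only if M^{(k)} = b_{k·eᵢ}(f,k,Δ) for some vertex multi-index k·eᵢ, i ∈ {0,1,…,n}. The analogous statement holds for the minimum: min_{x ∈ Δ} f(x) = min_{|α|=k} b_α(f,k,Δ) if and only if the minimum coefficient is attained at some vertex multi-index. -/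
/-!
Bernstein basis polynomials are nonnegative on the simplex, so with `M = max b_α / c_α` we get
`p - M q = ∑ (b_α - M c_α) B_α ≤ 0`, i.e. `p / q ≤ M`. At the vertex `vᵢ` only `B_{k eᵢ}` is
nonzero, so `(p / q)(vᵢ) = b_{k eᵢ} / c_{k eᵢ}`: a maximal vertex coefficient is attained.
Conversely, if `M` is the supremum it is attained at some `x` by compactness; there every term
of `∑ (M c_α - b_α) B_α(x) = 0` vanishes, and some vertex polynomial `B_{k eᵢ}(x) = λᵢ(x)ᵏ` is
positive because the barycentric coordinates `λᵢ(x)` sum to one. The minimum follows by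
replacing `p` with `-p`.
-/

open Finset

noncomputable section

namespace Finset

variable {ι K : Type*} {s : Finset ι}

theorem sup'_neg_eq_neg_inf' {α : Type*} [AddCommGroup α] [LinearOrder α] [IsOrderedAddMonoid α]
    (hs : s.Nonempty) (f : ι → α) : s.sup' hs (fun i => -f i) = -s.inf' hs f := by
  obtain ⟨j, hj, hinf⟩ := s.exists_mem_eq_inf' hs f
  refine le_antisymm (sup'_le hs _ fun i hi => neg_le_neg (inf'_le f hi)) ?_
  rw [hinf]
  exact le_sup' (fun i => -f i) hj

variable [Field K] [LinearOrder K] [IsStrictOrderedRing K] {b c w : ι → K}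

theorem sum_mul_le_sup'_div_mul_sum (hs : s.Nonempty) (hc : ∀ i ∈ s, 0 < c i)
    (hw : ∀ i ∈ s, 0 ≤ w i) :
    ∑ i ∈ s, b i * w i ≤ s.sup' hs (fun i => b i / c i) * ∑ i ∈ s, c i * w i := by
  rw [mul_sum]
  refine sum_le_sum fun i hi => ?_
  have hbc : b i ≤ s.sup' hs (fun i => b i / c i) * c i :=
    (div_le_iff₀ (hc i hi)).mp (le_sup' (fun i => b i / c i) hi)
  calc b i * w i ≤ s.sup' hs (fun i => b i / c i) * c i * w i :=
        mul_le_mul_of_nonneg_right hbc (hw i hi)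
    _ = _ := mul_assoc _ _ _

theorem div_eq_sup'_of_sum_mul_eq (hs : s.Nonempty) (hc : ∀ i ∈ s, 0 < c i)
    (hw : ∀ i ∈ s, 0 ≤ w i)
    (h : ∑ i ∈ s, b i * w i = s.sup' hs (fun i => b i / c i) * ∑ i ∈ s, c i * w i)
    {i : ι} (hi : i ∈ s) (hwi : 0 < w i) : b i / c i = s.sup' hs (fun i => b i / c i) := by
  set M := s.sup' hs (fun i => b i / c i)
  have hgap : ∀ j ∈ s, 0 ≤ (M * c j - b j) * w j := fun j hj =>
    mul_nonneg (sub_nonneg.mpr ((div_le_iff₀ (hc j hj)).mp (le_sup' (fun i => b i / c i) hj)))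
      (hw j hj)
  have hsum : ∑ j ∈ s, (M * c j - b j) * w j = 0 := by
    simp only [sub_mul, sum_sub_distrib, mul_assoc, ← mul_sum, h, sub_self]
  have hzero := (sum_eq_zero_iff_of_nonneg hgap).mp hsum i hi
  rw [div_eq_iff (hc i hi).ne']
  linarith [(mul_eq_zero.mp hzero).resolve_right hwi.ne']

end Finset

section Bernstein

variable {n k : ℕ}

/-- Index `0` holds `1 - ∑ xᵢ`, the coordinate of the vertex at the origin, matching the position
of `α₀` in a multi-index. -/
def bary (x : Fin n → ℝ) : Fin (n+1) → ℝ := Fin.cons (1 - ∑ i, x i) x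

lemma sum_bary (x : Fin n → ℝ) : ∑ j, bary x j = 1 := by
  simp [bary, Fin.sum_univ_succ]

lemma bary_tail {y : Fin (n+1) → ℝ} (hy : ∑ j, y j = 1) : bary (Fin.tail y) = y := by
  rw [Fin.sum_univ_succ] at hy
  ext j
  refine Fin.cases ?_ (fun m => ?_) j
  · simp [bary, Fin.tail, ← hy]
  · simp [bary, Fin.tail]

lemma mem_stdSimp_iff_bary_mem {x : Fin n → ℝ} :
    x ∈ stdSimp n ↔ bary x ∈ stdSimplex ℝ (Fin (n+1)) := by
  simp [stdSimp, stdSimplex, Fin.forall_fin_succ, bary, and_comm]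

lemma stdSimp_eq_image_tail : stdSimp n = Fin.tail '' stdSimplex ℝ (Fin (n+1)) := by
  ext x
  constructor
  · exact fun hx => ⟨bary x, mem_stdSimp_iff_bary_mem.mp hx, by simp [bary]⟩
  · rintro ⟨y, hy, rfl⟩
    rw [mem_stdSimp_iff_bary_mem, bary_tail hy.2]
    exact hy

lemma isCompact_stdSimp : IsCompact (stdSimp n) := by
  rw [stdSimp_eq_image_tail]
  exact isCompact_stdSimplex ℝ _ |>.image (by fun_prop)

lemma bern_eq_prod_bary (α : Fin (n+1) → ℕ) (x : Fin n → ℝ) :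
    bern n k α x = (k.factorial / ∏ j, ((α j).factorial : ℝ)) * ∏ j, bary x j ^ α j := by
  simp [bern, bary, Fin.prod_univ_succ]
  ring

lemma bern_nonneg (α : Fin (n+1) → ℕ) {x : Fin n → ℝ} (hx : x ∈ stdSimp n) :
    0 ≤ bern n k α x := by
  rw [bern_eq_prod_bary]
  have hbary := (mem_stdSimp_iff_bary_mem.mp hx).1
  exact mul_nonneg (by positivity) (prod_nonneg fun j _ => pow_nonneg (hbary j) _)

lemma continuous_bern (α : Fin (n+1) → ℕ) : Continuous (bern n k α) := by
  unfold bern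
  fun_prop

lemma vertIdx_mem (i : Fin (n+1)) : vertIdx n k i ∈ multIdx n k := by
  simp [multIdx, Nat.mem_antidiagonalTuple, vertIdx]

lemma prod_factorial_vertIdx (i : Fin (n+1)) :
    ∏ j, ((vertIdx n k i j).factorial : ℝ) = k.factorial := by
  simp [vertIdx, apply_ite Nat.factorial]

lemma bern_vertIdx (i : Fin (n+1)) (x : Fin n → ℝ) :
    bern n k (vertIdx n k i) x = bary x i ^ k := by
  rw [bern_eq_prod_bary, prod_factorial_vertIdx, div_self (by positivity), one_mul]
  simp [vertIdx, pow_ite]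

lemma exists_bern_vertIdx_pos (x : Fin n → ℝ) :
    ∃ i, 0 < bern n k (vertIdx n k i) x := by
  obtain ⟨i, -, hi⟩ := exists_lt_of_sum_lt (s := univ) (f := fun _ => (0 : ℝ)) (g := bary x)
    (by simp [sum_bary])
  exact ⟨i, bern_vertIdx i x ▸ pow_pos hi k⟩

lemma eq_vertIdx_of_forall_ne {α : Fin (n+1) → ℕ} (hα : α ∈ multIdx n k) {i : Fin (n+1)}
    (h : ∀ j ≠ i, α j = 0) : α = vertIdx n k i := by
  rw [multIdx, Nat.mem_antidiagonalTuple] at hα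
  ext j
  by_cases hj : j = i
  · subst hj
    simp [vertIdx, ← hα, sum_eq_single_of_mem j (mem_univ j) fun j' _ => h j']
  · simp [vertIdx, hj, h j hj]

def simplexVertex (i : Fin (n+1)) : Fin n → ℝ := Fin.tail (Pi.single i 1 : Fin (n+1) → ℝ)

lemma bary_simplexVertex (i : Fin (n+1)) : bary (simplexVertex i) = Pi.single i 1 :=
  bary_tail (single_mem_stdSimplex ℝ i).2

lemma simplexVertex_mem (i : Fin (n+1)) : simplexVertex i ∈ stdSimp n := by
  rw [mem_stdSimp_iff_bary_mem, bary_simplexVertex]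
  exact single_mem_stdSimplex ℝ i

lemma bern_simplexVertex {α : Fin (n+1) → ℕ} (hα : α ∈ multIdx n k) (i : Fin (n+1)) :
    bern n k α (simplexVertex i) = if α = vertIdx n k i then 1 else 0 := by
  split_ifs with h
  · rw [h, bern_vertIdx, bary_simplexVertex]
    simp
  · obtain ⟨j, hji, hj⟩ : ∃ j ≠ i, α j ≠ 0 := by
      by_contra! hcon
      exact h (eq_vertIdx_of_forall_ne hα hcon)
    rw [bern_eq_prod_bary, bary_simplexVertex]
    refine mul_eq_zero_of_right _ (prod_eq_zero (mem_univ j) ?_)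
    simp [hji, hj]

end Bernstein

section BernsteinPoly

variable {n k : ℕ}

def bernPoly (n k : ℕ) (b : (Fin (n+1) → ℕ) → ℝ) (x : Fin n → ℝ) : ℝ :=
  ∑ α ∈ multIdx n k, b α * bern n k α x

lemma bernPoly_neg (b : (Fin (n+1) → ℕ) → ℝ) (x : Fin n → ℝ) :
    bernPoly n k (fun α => -b α) x = -bernPoly n k b x := by
  simp [bernPoly, neg_mul, sum_neg_distrib]

lemma continuous_bernPoly (b : (Fin (n+1) → ℕ) → ℝ) : Continuous (bernPoly n k b) :=
  continuous_finsetSum _ fun α _ => continuous_const.mul (continuous_bern α)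

lemma bernPoly_simplexVertex (b : (Fin (n+1) → ℕ) → ℝ) (i : Fin (n+1)) :
    bernPoly n k b (simplexVertex i) = b (vertIdx n k i) := by
  simp only [bernPoly]
  rw [sum_congr rfl fun α hα => by rw [bern_simplexVertex hα]]
  simp [vertIdx_mem]

lemma bernPoly_pos {c : (Fin (n+1) → ℕ) → ℝ} (hc : ∀ α ∈ multIdx n k, 0 < c α)
    {x : Fin n → ℝ} (hx : x ∈ stdSimp n) : 0 < bernPoly n k c x := by
  obtain ⟨i, hi⟩ := exists_bern_vertIdx_pos (k := k) x
  exact sum_pos' (fun α hα => mul_nonneg (hc α hα).le (bern_nonneg α hx))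
    ⟨vertIdx n k i, vertIdx_mem i, mul_pos (hc _ (vertIdx_mem i)) hi⟩

end BernsteinPoly

theorem IsCompact.sSup_image_eq_iff {α β : Type*} [TopologicalSpace α]
    [ConditionallyCompleteLinearOrder β] [TopologicalSpace β] [OrderTopology β]
    {S : Set α} {f : α → β} (hS : IsCompact S) (hne : S.Nonempty) (hf : ContinuousOn f S) {M : β}
    (hM : ∀ x ∈ S, f x ≤ M) : sSup (f '' S) = M ↔ ∃ x ∈ S, f x = M := by
  constructor
  · intro hsup
    exact hsup ▸ (hS.image_of_continuousOn hf).sSup_mem (hne.image f)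
  · rintro ⟨x, hx, rfl⟩
    exact IsGreatest.csSup_eq ⟨Set.mem_image_of_mem f hx, Set.forall_mem_image.2 hM⟩

section Enclosure

variable {n k : ℕ} {b c : (Fin (n+1) → ℕ) → ℝ}

theorem bernPoly_div_le_sup' (hc : ∀ α ∈ multIdx n k, 0 < c α) {x : Fin n → ℝ}
    (hx : x ∈ stdSimp n) : bernPoly n k b x / bernPoly n k c x ≤
      (multIdx n k).sup' (multIdx_nonempty n k) (fun α => b α / c α) := by
  rw [div_le_iff₀ (bernPoly_pos hc hx)]
  exact sum_mul_le_sup'_div_mul_sum _ hc fun α _ => bern_nonneg α hx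

theorem sSup_bernPoly_div_eq_sup'_iff (hc : ∀ α ∈ multIdx n k, 0 < c α) :
    sSup ((fun x => bernPoly n k b x / bernPoly n k c x) '' stdSimp n) =
        (multIdx n k).sup' (multIdx_nonempty n k) (fun α => b α / c α) ↔
      ∃ i : Fin (n+1), (multIdx n k).sup' (multIdx_nonempty n k) (fun α => b α / c α) =
        b (vertIdx n k i) / c (vertIdx n k i) := by
  have hcont : ContinuousOn (fun x => bernPoly n k b x / bernPoly n k c x) (stdSimp n) :=
    (continuous_bernPoly b).continuousOn.div (continuous_bernPoly c).continuousOn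
      fun x hx => (bernPoly_pos hc hx).ne'
  rw [isCompact_stdSimp.sSup_image_eq_iff ⟨_, simplexVertex_mem 0⟩ hcont
    fun x hx => bernPoly_div_le_sup' hc hx]
  constructor
  · rintro ⟨x, hx, hmax⟩
    rw [div_eq_iff (bernPoly_pos hc hx).ne'] at hmax
    obtain ⟨i, hi⟩ := exists_bern_vertIdx_pos (k := k) x
    exact ⟨i, (div_eq_sup'_of_sum_mul_eq _ hc (fun α _ => bern_nonneg α hx) hmax
      (vertIdx_mem i) hi).symm⟩
  · rintro ⟨i, hi⟩
    exact ⟨simplexVertex i, simplexVertex_mem i, by simp only [bernPoly_simplexVertex, hi]⟩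

theorem sInf_bernPoly_div_eq_inf'_iff (hc : ∀ α ∈ multIdx n k, 0 < c α) :
    sInf ((fun x => bernPoly n k b x / bernPoly n k c x) '' stdSimp n) =
        (multIdx n k).inf' (multIdx_nonempty n k) (fun α => b α / c α) ↔
      ∃ i : Fin (n+1), (multIdx n k).inf' (multIdx_nonempty n k) (fun α => b α / c α) =
        b (vertIdx n k i) / c (vertIdx n k i) := by
  have himage : (fun x => bernPoly n k b x / bernPoly n k c x) '' stdSimp n =
      -((fun x => bernPoly n k (fun α => -b α) x / bernPoly n k c x) '' stdSimp n) := by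
    rw [← Set.image_neg_eq_neg, Set.image_image]
    simp only [bernPoly_neg, neg_div, neg_neg]
  have hinf : (multIdx n k).inf' (multIdx_nonempty n k) (fun α => b α / c α) =
      -(multIdx n k).sup' (multIdx_nonempty n k) (fun α => -b α / c α) := by
    simp only [neg_div, sup'_neg_eq_neg_inf', neg_neg]
  rw [himage, Real.sInf_neg, hinf, neg_inj, sSup_bernPoly_div_eq_sup'_iff hc]
  simp only [neg_div, neg_eq_iff_eq_neg]

end Enclosure

theorem stmt8_general (n k : ℕ)
    (p q : (Fin n → ℝ) → ℝ) (b c : (Fin (n+1) → ℕ) → ℝ)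
    (hrepp : ∀ x, p x = ∑ α ∈ multIdx n k, b α * bern n k α x)
    (hrepq : ∀ x, q x = ∑ α ∈ multIdx n k, c α * bern n k α x)
    (hc : ∀ α ∈ multIdx n k, 0 < c α) :
    (sSup ((fun x => p x / q x) '' stdSimp n) =
        (multIdx n k).sup' (multIdx_nonempty n k) (fun α => b α / c α) ↔
      ∃ i : Fin (n+1),
        (multIdx n k).sup' (multIdx_nonempty n k) (fun α => b α / c α) =
          b (vertIdx n k i) / c (vertIdx n k i)) ∧
    (sInf ((fun x => p x / q x) '' stdSimp n) =
        (multIdx n k).inf' (multIdx_nonempty n k) (fun α => b α / c α) ↔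
      ∃ i : Fin (n+1),
        (multIdx n k).inf' (multIdx_nonempty n k) (fun α => b α / c α) =
          b (vertIdx n k i) / c (vertIdx n k i)) := by
  obtain rfl : p = bernPoly n k b := funext hrepp
  obtain rfl : q = bernPoly n k c := funext hrepq
  exact ⟨sSup_bernPoly_div_eq_sup'_iff hc, sInf_bernPoly_div_eq_inf'_iff hc⟩

/-- sharpness of the rational enclosure bound. -/
theorem stmt8 (n k : ℕ) (hn : 1 ≤ n)
    (p q : (Fin n → ℝ) → ℝ) (b c : (Fin (n+1) → ℕ) → ℝ)
    (hrepp : ∀ x, p x = ∑ α ∈ multIdx n k, b α * bern n k α x)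
    (hrepq : ∀ x, q x = ∑ α ∈ multIdx n k, c α * bern n k α x)
    (hc : ∀ α ∈ multIdx n k, 0 < c α) :
    (sSup ((fun x => p x / q x) '' stdSimp n) =
        (multIdx n k).sup' (multIdx_nonempty n k) (fun α => b α / c α) ↔
      ∃ i : Fin (n+1),
        (multIdx n k).sup' (multIdx_nonempty n k) (fun α => b α / c α) =
          b (vertIdx n k i) / c (vertIdx n k i)) ∧
    (sInf ((fun x => p x / q x) '' stdSimp n) =
        (multIdx n k).inf' (multIdx_nonempty n k) (fun α => b α / c α) ↔
      ∃ i : Fin (n+1),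
        (multIdx n k).inf' (multIdx_nonempty n k) (fun α => b α / c α) =
          b (vertIdx n k i) / c (vertIdx n k i)) :=
  stmt8_general n k p q b c hrepp hrepq hc
end
end
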